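/- Let G be an IB-homogeneous graph in which some bimorphism maps a nonedge to an edge, and let X be a finite subset of G that is not a clique. Then there exists a bimorphism F of G such that the induced subgraph on F(X) has strictly more edges than the induced subgraph on X, and |F(X)| = |X|. -/

import Mathlib

/-- A bimorphism of a graph: a bijective edge-preserving self-map. -/
def IsBimorphism {V : Type*} (G : SimpleGraph V) (F : V → V) : Prop :=
  Function.Bijective F ∧ ∀ u v, G.Adj u v → G.Adj (F u) (F v)

/-- A partial isomorphism of `G` with finite domain `S`. -/
def IsPartialIso {V : Type*} (G : SimpleGraph V) (S : Finset V) (f : V → V) : Prop :=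
  Set.InjOn f S ∧ ∀ u ∈ S, ∀ v ∈ S, (G.Adj u v ↔ G.Adj (f u) (f v))

/-- `G` is IB-homogeneous: every isomorphism between finite induced subgraphs
extends to a bimorphism of `G`. -/
def IBHom {V : Type*} (G : SimpleGraph V) : Prop :=
  ∀ (S : Finset V) (f : V → V), IsPartialIso G S f →
    ∃ F : V → V, IsBimorphism G F ∧ ∀ x ∈ S, F x = f x

/-- `G` represents the monomorphism `m`: some bimorphism maps a nonedge to an edge. -/
def RepM {V : Type*} (G : SimpleGraph V) : Prop :=
  ∃ F : V → V, IsBimorphism G F ∧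
    ∃ u v : V, u ≠ v ∧ ¬ G.Adj u v ∧ G.Adj (F u) (F v)

/-- An independent set: pairwise nonadjacent vertices. -/
def IsIndep {V : Type*} (G : SimpleGraph V) (s : Set V) : Prop :=
  s.Pairwise fun u v => ¬ G.Adj u v

/-! Compose the bimorphism witnessing `RepM` with a bimorphism extending the partial isomorphism
that sends a nonedge `x y` of `X` onto the nonedge it turns into an edge. The composite maps
every edge of `X` to an edge of `F '' X` injectively, and in addition hits the new edge
`(F x, F y)`, which is not the image of an edge. -/

theorem IsBimorphism.comp {V : Type*} {G : SimpleGraph V} {F H : V → V}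
    (hF : IsBimorphism G F) (hH : IsBimorphism G H) : IsBimorphism G (F ∘ H) :=
  ⟨hF.1.comp hH.1, fun _ _ h => hF.2 _ _ (hH.2 _ _ h)⟩

theorem isPartialIso_pair {V : Type*} [DecidableEq V] (G : SimpleGraph V) {x y u v : V}
    (hxy : x ≠ y) (huv : u ≠ v) (hxy' : ¬ G.Adj x y) (huv' : ¬ G.Adj u v) :
    IsPartialIso G {x, y} (fun z => if z = x then u else v) := by
  have hyx : y ≠ x := hxy.symm
  refine ⟨?_, ?_⟩
  · intro a ha b hb hab
    simp only [Finset.coe_insert, Finset.coe_singleton, Set.mem_insert_iff,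
      Set.mem_singleton_iff] at ha hb
    rcases ha with rfl | rfl <;> rcases hb with rfl | rfl <;> simp_all
  · intro a ha b hb
    simp only [Finset.mem_insert, Finset.mem_singleton] at ha hb
    rcases ha with rfl | rfl <;> rcases hb with rfl | rfl <;>
      simp [hyx, hxy', huv', mt G.adj_symm hxy', mt G.adj_symm huv']

theorem IBHom.exists_bimorphism_adj_of_not_adj {V : Type*} {G : SimpleGraph V}
    (hG : IBHom G) (hm : RepM G) {x y : V} (hxy : x ≠ y) (hnadj : ¬ G.Adj x y) :
    ∃ F : V → V, IsBimorphism G F ∧ G.Adj (F x) (F y) := by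
  classical
  obtain ⟨F, hF, u, v, huv, hnuv, hFuv⟩ := hm
  obtain ⟨H, hH, hHext⟩ := hG _ _ (isPartialIso_pair G hxy huv hnadj hnuv)
  refine ⟨F ∘ H, hF.comp hH, ?_⟩
  simpa [hHext x (by simp), hHext y (by simp), hxy.symm] using hFuv

def adjPairs {V : Type*} (G : SimpleGraph V) (s : Set V) : Set (V × V) :=
  {p | p.1 ∈ s ∧ p.2 ∈ s ∧ G.Adj p.1 p.2}

theorem adjPairs_finite {V : Type*} (G : SimpleGraph V) {s : Set V} (hs : s.Finite) :
    (adjPairs G s).Finite :=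
  (hs.prod hs).subset fun _ hp => ⟨hp.1, hp.2.1⟩

theorem ncard_adjPairs_lt_image {V : Type*} {G : SimpleGraph V} {F : V → V}
    (hF : IsBimorphism G F) {s : Set V} (hs : s.Finite) {x y : V} (hx : x ∈ s) (hy : y ∈ s)
    (hnadj : ¬ G.Adj x y) (hFadj : G.Adj (F x) (F y)) :
    (adjPairs G s).ncard < (adjPairs G (F '' s)).ncard := by
  have hinj : Function.Injective (Prod.map F F) := hF.1.injective.prodMap hF.1.injective
  have hsub : Prod.map F F '' adjPairs G s ⊆ adjPairs G (F '' s) := by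
    rintro _ ⟨p, ⟨hp1, hp2, hpadj⟩, rfl⟩
    exact ⟨⟨p.1, hp1, rfl⟩, ⟨p.2, hp2, rfl⟩, hF.2 _ _ hpadj⟩
  have hnew : (F x, F y) ∉ Prod.map F F '' adjPairs G s := by
    rintro ⟨p, ⟨-, -, hpadj⟩, hpe⟩
    obtain rfl : p = (x, y) := hinj hpe
    exact hnadj hpadj
  rw [← Set.ncard_image_of_injective _ hinj]
  exact Set.ncard_lt_ncard ⟨hsub, fun h => hnew (h ⟨⟨x, hx, rfl⟩, ⟨y, hy, rfl⟩, hFadj⟩)⟩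
    (adjPairs_finite G (hs.image F))

/-- In an IB-homogeneous graph representing `m`, any finite non-clique can be mapped by a
bimorphism to a set of the same size with strictly more edges. -/
theorem stmt16 {V : Type*} (G : SimpleGraph V) (hG : IBHom G) (hm : RepM G)
    (X : Finset V) (hX : ∃ x ∈ X, ∃ y ∈ X, x ≠ y ∧ ¬ G.Adj x y) :
    ∃ F : V → V, IsBimorphism G F ∧ (F '' ↑X).ncard = X.card ∧
      {p : V × V | p.1 ∈ X ∧ p.2 ∈ X ∧ G.Adj p.1 p.2}.ncard <
      {p : V × V | p.1 ∈ F '' ↑X ∧ p.2 ∈ F '' ↑X ∧ G.Adj p.1 p.2}.ncard := by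
  obtain ⟨x, hx, y, hy, hxy, hnadj⟩ := hX
  obtain ⟨F, hF, hFadj⟩ := hG.exists_bimorphism_adj_of_not_adj hm hxy hnadj
  refine ⟨F, hF, ?_, ncard_adjPairs_lt_image hF X.finite_toSet hx hy hnadj hFadj⟩
  rw [Set.ncard_image_of_injective _ hF.1.injective, Set.ncard_coe_finset]
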